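/- For any α > 0 and any z = x + iy in the upper half plane, the theta function θ(α; z) = Σ_{(m,n)∈ℤ²} exp(−απ|mz+n|²/y) satisfies the functional identity θ(1/α; z) = α·θ(α; z). -/

import Mathlib

/-!
Write `z = x + iy`. Since `|mz + n|² = (mx + n)² + m²y²`, the inner sum over `n` of `θ(α; z)`
is a shifted Gaussian sum, and Poisson summation turns it into
`θ(α; z) = √(y/α) · Σ_{m,k} exp(-π(αy)m² - π(y/α)k² - 2πi·x·mk)`.
The double series on the right is symmetric in the two Gaussian widths `αy` and `y/α`, which
are swapped by `α ↦ 1/α`; only the prefactor changes, from `√(y/α)` to `√(αy) = α·√(y/α)`.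
-/

open Real

/-- The two-dimensional theta function `θ(α; z) = Σ_{(m,n)∈ℤ²} exp(−(απ/y)|mz+n|²)`. -/
noncomputable def theta (α : ℝ) (z : ℂ) : ℝ :=
  ∑' p : ℤ × ℤ, Real.exp (-(α * π / z.im) * ‖(p.1 : ℂ) * z + (p.2 : ℂ)‖ ^ 2)

open Complex

lemma summable_exp_neg_pi_mul_int_sq {b : ℝ} (hb : 0 < b) :
    Summable fun n : ℤ => rexp (-π * b * n ^ 2) := by
  have hθ := (summable_jacobiTheta₂_term_iff 0 (b * I)).mpr (by simpa using hb)
  refine hθ.norm.congr fun n => ?_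
  rw [norm_jacobiTheta₂_term]
  simp only [mul_im, ofReal_re, I_im, ofReal_im, I_re, zero_im]
  ring_nf

lemma exists_pos_mul_sq_add_sq_le_norm_sq {z : ℂ} (hz : 0 < z.im) :
    ∃ c > 0, ∀ m n : ℝ, c * (m ^ 2 + n ^ 2) ≤ ‖m * z + n‖ ^ 2 := by
  refine ⟨z.im ^ 2 / (2 * (1 + z.re ^ 2 + z.im ^ 2)), by positivity, fun m n => ?_⟩
  rw [Complex.sq_norm, normSq_apply]
  simp only [add_re, mul_re, ofReal_re, ofReal_im, zero_mul, sub_zero, add_im, mul_im, add_zero]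
  rw [div_mul_eq_mul_div, div_le_iff₀ (by positivity)]
  have hn : n ^ 2 ≤ 2 * (m * z.re + n) ^ 2 + 2 * m ^ 2 * z.re ^ 2 := by
    nlinarith [sq_nonneg (m * z.re + n + m * z.re)]
  nlinarith [mul_le_mul_of_nonneg_left hn (sq_nonneg z.im),
    mul_nonneg (sq_nonneg (m * z.re + n)) (add_nonneg zero_le_one (sq_nonneg z.re)),
    mul_nonneg (sq_nonneg (m * z.im)) (sq_nonneg z.im), sq_nonneg (m * z.re * z.im)]

lemma summable_theta_term {α : ℝ} (hα : 0 < α) {z : ℂ} (hz : 0 < z.im) :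
    Summable fun p : ℤ × ℤ => rexp (-(α * π / z.im) * ‖(p.1 : ℂ) * z + p.2‖ ^ 2) := by
  obtain ⟨c, hc, hle⟩ := exists_pos_mul_sq_add_sq_le_norm_sq hz
  have hb : 0 < α * c / z.im := by positivity
  have hg := summable_exp_neg_pi_mul_int_sq hb
  refine Summable.of_nonneg_of_le (fun _ => (exp_pos _).le) (fun p => ?_)
    (hg.mul_of_nonneg hg (fun _ => (exp_pos _).le) fun _ => (exp_pos _).le)
  have hmn := hle p.1 p.2
  push_cast at hmn
  rw [← Real.exp_add, Real.exp_le_exp]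
  calc -(α * π / z.im) * ‖(p.1 : ℂ) * z + p.2‖ ^ 2
      ≤ -(α * π / z.im) * (c * ((p.1 : ℝ) ^ 2 + (p.2 : ℝ) ^ 2)) := by
        rw [neg_mul, neg_mul, neg_le_neg_iff]
        exact mul_le_mul_of_nonneg_left hmn (by positivity)
    _ = _ := by field_simp; ring

lemma tsum_exp_neg_pi_mul_add_sq {β : ℝ} (hβ : 0 < β) (t : ℝ) :
    ∑' n : ℤ, cexp (-π * β * (n + t) ^ 2) =
      (√β : ℂ)⁻¹ * ∑' k : ℤ, cexp (-π / β * k ^ 2 - 2 * π * I * t * k) := by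
  have hre : 0 < ((β : ℂ)⁻¹).re := by rw [← ofReal_inv, ofReal_re]; positivity
  have hsqrt : ((β : ℂ)⁻¹) ^ (1 / 2 : ℂ) = (√β : ℂ)⁻¹ := by
    rw [← ofReal_inv, show (1 / 2 : ℂ) = ((1 / 2 : ℝ) : ℂ) by norm_num,
      ← ofReal_cpow (by positivity), Real.sqrt_eq_rpow, Real.inv_rpow hβ.le, ofReal_inv]
  have hβ' : (√β : ℂ) ≠ 0 := ofReal_ne_zero.mpr (Real.sqrt_pos.mpr hβ).ne'
  have := Complex.tsum_exp_neg_quadratic hre (-I * t)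
  rw [hsqrt, one_div, inv_inv] at this
  have hI : I * (-I * t) = t := by rw [← mul_assoc, mul_neg, I_mul_I, neg_neg, one_mul]
  simp_rw [hI, div_inv_eq_mul] at this
  rw [eq_inv_mul_iff_mul_eq₀ hβ', ← this]
  exact tsum_congr fun k => congrArg cexp (by ring)

noncomputable def dualTheta (a b x : ℝ) : ℂ :=
  ∑' p : ℤ × ℤ, cexp (-π * a * p.1 ^ 2 - π * b * p.2 ^ 2 - 2 * π * I * x * p.1 * p.2)

lemma summable_dualTheta_term {a b : ℝ} (ha : 0 < a) (hb : 0 < b) (x : ℝ) :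
    Summable fun p : ℤ × ℤ =>
      cexp (-π * a * p.1 ^ 2 - π * b * p.2 ^ 2 - 2 * π * I * x * p.1 * p.2) := by
  refine Summable.of_norm <| ((summable_exp_neg_pi_mul_int_sq ha).mul_of_nonneg
    (summable_exp_neg_pi_mul_int_sq hb) (fun _ => (exp_pos _).le)
    (fun _ => (exp_pos _).le)).congr fun p => ?_
  rw [norm_exp, ← Real.exp_add]
  congr 1
  simp only [sub_re, mul_re, neg_re, ofReal_re, ofReal_im, I_re, I_im, intCast_re, intCast_im,
    re_ofNat, im_ofNat, pow_two, mul_im, neg_im]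
  ring

lemma dualTheta_comm (a b x : ℝ) : dualTheta a b x = dualTheta b a x := by
  rw [dualTheta, ← (Equiv.prodComm ℤ ℤ).tsum_eq]
  refine tsum_congr fun p => congrArg cexp ?_
  simp only [Equiv.prodComm_apply, Prod.fst_swap, Prod.snd_swap]
  ring

lemma ofReal_theta_eq {α : ℝ} (hα : 0 < α) {z : ℂ} (hz : 0 < z.im) :
    (theta α z : ℂ) = √(z.im / α) * dualTheta (α * z.im) (z.im / α) z.re := by
  have hterm : ∀ m n : ℤ, (rexp (-(α * π / z.im) * ‖(m : ℂ) * z + n‖ ^ 2) : ℂ) =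
      rexp (-π * (α * z.im) * m ^ 2) *
        cexp (-π * (α / z.im : ℝ) * (n + (m * z.re : ℝ)) ^ 2) := by
    intro m n
    rw [ofReal_exp, ofReal_exp, ← Complex.exp_add, Complex.sq_norm, normSq_apply]
    congr 1
    simp only [add_re, mul_re, add_im, mul_im, intCast_re, intCast_im]
    push_cast
    field_simp
    ring
  have hsqrt : (√(α / z.im) : ℂ)⁻¹ = √(z.im / α) := by
    rw [← ofReal_inv, ← Real.sqrt_inv, inv_div]
  calc (theta α z : ℂ)
      = ∑' m : ℤ, ∑' n : ℤ, (rexp (-(α * π / z.im) * ‖(m : ℂ) * z + n‖ ^ 2) : ℂ) := by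
        rw [theta, ofReal_tsum, (summable_ofReal.mpr (summable_theta_term hα hz)).tsum_prod]
    _ = ∑' m : ℤ, (rexp (-π * (α * z.im) * m ^ 2) : ℂ) * ((√(α / z.im) : ℂ)⁻¹ * ∑' k : ℤ,
          cexp (-π / (α / z.im : ℝ) * k ^ 2 - 2 * π * I * (m * z.re : ℝ) * k)) := by
        simp_rw [hterm, tsum_mul_left, tsum_exp_neg_pi_mul_add_sq (div_pos hα hz)]
    _ = √(z.im / α) * ∑' m : ℤ, ∑' k : ℤ, cexp
          (-π * (α * z.im) * m ^ 2 - π * (z.im / α) * k ^ 2 - 2 * π * I * z.re * m * k) := by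
        rw [← hsqrt, ← tsum_mul_left]
        refine tsum_congr fun m => ?_
        rw [mul_left_comm, ← tsum_mul_left]
        congr 1
        refine tsum_congr fun k => ?_
        rw [ofReal_exp, ← Complex.exp_add]
        congr 1
        have : (α : ℂ) ≠ 0 := ofReal_ne_zero.mpr hα.ne'
        push_cast
        field_simp
        ring
    _ = √(z.im / α) * dualTheta (α * z.im) (z.im / α) z.re := by
        rw [dualTheta, (summable_dualTheta_term (by positivity) (by positivity) _).tsum_prod]
        push_cast
        rfl

theorem theta_one_div (α : ℝ) (hα : 0 < α) (z : ℂ) (hz : 0 < z.im) :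
    theta (1 / α) z = α * theta α z := by
  have hsqrt : √(z.im / (1 / α)) = α * √(z.im / α) := by
    rw [show z.im / (1 / α) = α ^ 2 * (z.im / α) by field_simp, Real.sqrt_mul (by positivity),
      Real.sqrt_sq hα.le]
  have hswap : dualTheta (1 / α * z.im) (z.im / (1 / α)) z.re =
      dualTheta (α * z.im) (z.im / α) z.re := by
    rw [dualTheta_comm]
    congr 1 <;> field_simp
  rw [← ofReal_inj, ofReal_mul, ofReal_theta_eq (by positivity) hz, ofReal_theta_eq hα hz, hswap,
    hsqrt]
  push_cast
  ring
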